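/- arXiv:2306.11404 — 3 statements merged into one kernel-verified Lean document; each statement's English description precedes it below -/
import Mathlib

section
/- If ξ is a centered Gaussian vector in ℝ^d with covariance matrix Σ, then for all 0 ≤ λ < 1/(2‖Σ‖), log E[exp(λ‖ξ‖²)] ≤ λ·tr(Σ) + λ²‖Σ‖_F² / (1 − 2λ‖Σ‖). -/
open MeasureTheory ProbabilityTheory Real RealInnerProductSpace

/-! With `g` a standard Gaussian vector, `exp (λ‖x‖²) = E exp ⟪√(2λ) x, g⟫`. Integrating over `ξ`
and swapping the integrals (Tonelli), the moment generating function of `ξ` turns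
`E exp (λ‖ξ‖²)` into `E exp (λ⟪g, Σ g⟫)`, which in an eigenbasis of `Σ` factorises as
`∏ᵢ (1 - 2λσᵢ)^(-1/2)`. Taking logarithms, `-log (1 - x) ≤ x + x² / (2 (1 - x))` bounds each
factor, and `∑ σᵢ = tr Σ`, `∑ σᵢ² = ‖Σ‖_F²`, `σᵢ ≤ ‖Σ‖` conclude. -/

-- `log t ≤ sinh (log t) = (t - t⁻¹) / 2` at `t = (1 - x)⁻¹`.
lemma neg_log_one_sub_le {x : ℝ} (hx0 : 0 ≤ x) (hx1 : x < 1) :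
    -log (1 - x) ≤ x + x ^ 2 / (2 * (1 - x)) := by
  have hpos : 0 < 1 - x := by linarith
  have h := self_le_sinh_iff.2 (log_nonneg (one_le_inv₀ hpos |>.2 (by linarith)))
  rw [sinh_log (inv_pos.2 hpos), inv_inv, log_inv] at h
  calc -log (1 - x) ≤ ((1 - x)⁻¹ - (1 - x)) / 2 := h
    _ = x + x ^ 2 / (2 * (1 - x)) := by field_simp; ring

lemma log_inv_sqrt_one_sub_two_mul_le {t s : ℝ} (ht : 0 ≤ t) (hts : t ≤ s) (hs : 2 * s < 1) :
    log (√(1 - 2 * t))⁻¹ ≤ t + t ^ 2 / (1 - 2 * s) := by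
  have h := neg_log_one_sub_le (mul_nonneg zero_le_two ht) (by linarith)
  rw [log_inv, log_sqrt (by linarith)]
  calc -(log (1 - 2 * t) / 2) ≤ t + t ^ 2 / (1 - 2 * t) := by
        have : (2 * t) ^ 2 / (2 * (1 - 2 * t)) = 2 * (t ^ 2 / (1 - 2 * t)) := by
          field_simp
        linarith
    _ ≤ t + t ^ 2 / (1 - 2 * s) := by gcongr

lemma lintegral_ofReal_eq_of_integral_eq {α : Type*} [MeasurableSpace α] {μ : Measure α}
    {f : α → ℝ} {a : ℝ} (hf : 0 ≤ᵐ[μ] f) (ha : a ≠ 0) (h : ∫ x, f x ∂μ = a) :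
    ∫⁻ x, ENNReal.ofReal (f x) ∂μ = ENNReal.ofReal a := by
  rw [← h, ofReal_integral_eq_lintegral_ofReal (Integrable.of_integral_ne_zero (h ▸ ha)) hf]

lemma integral_exp_mul_sq_gaussianReal {k : ℝ} (hk : k < 1 / 2) :
    ∫ x, exp (k * x ^ 2) ∂gaussianReal 0 1 = (√(1 - 2 * k))⁻¹ := by
  have hpdf (x : ℝ) : gaussianPDFReal 0 1 x • exp (k * x ^ 2)
      = (√(2 * π))⁻¹ * exp (-(1 / 2 - k) * x ^ 2) := by
    rw [gaussianPDFReal, smul_eq_mul, mul_assoc, ← exp_add]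
    congr 3 <;> push_cast <;> ring
  rw [integral_gaussianReal_eq_integral_smul one_ne_zero]
  simp_rw [hpdf]
  rw [integral_const_mul, integral_gaussian, ← sqrt_inv, ← sqrt_mul (by positivity), ← sqrt_inv]
  congr 1
  have : 0 < 1 - 2 * k := by linarith
  field_simp

section StdGaussian

variable {E : Type*} [NormedAddCommGroup E] [InnerProductSpace ℝ E] [FiniteDimensional ℝ E]
  [MeasurableSpace E] [BorelSpace E]

lemma integral_stdGaussian_eq_integral_pi {ι : Type*} [Fintype ι] (b : OrthonormalBasis ι ℝ E)
    {f : E → ℝ} (hf : Continuous f) :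
    ∫ x, f x ∂stdGaussian E
      = ∫ v, f (∑ i, v i • b i) ∂Measure.pi fun _ : ι ↦ gaussianReal 0 1 := by
  have hb : Measurable fun v : ι → ℝ ↦ ∑ i, v i • b i := by fun_prop
  rw [stdGaussian_eq_map_pi_orthonormalBasis b,
    integral_map hb.aemeasurable hf.aestronglyMeasurable]

lemma integral_exp_inner_stdGaussian (w : E) :
    ∫ x, exp ⟪w, x⟫ ∂stdGaussian E = exp (‖w‖ ^ 2 / 2) := by
  let b := stdOrthonormalBasis ℝ E
  have hprod (v : Fin (Module.finrank ℝ E) → ℝ) :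
      exp ⟪w, ∑ i, v i • b i⟫ = ∏ i, exp (⟪w, b i⟫ * v i) := by
    simp [inner_sum, exp_sum, real_inner_smul_right, mul_comm]
  have hmgf (c : ℝ) : ∫ t, exp (c * t) ∂gaussianReal 0 1 = exp (c ^ 2 / 2) := by
    simpa [mgf] using congrFun (mgf_id_gaussianReal (μ := 0) (v := 1)) c
  rw [integral_stdGaussian_eq_integral_pi b (by fun_prop)]
  simp_rw [hprod]
  rw [integral_fintype_prod_eq_prod (fun i t ↦ exp (⟪w, b i⟫ * t))]
  simp_rw [hmgf, ← exp_sum, ← Finset.sum_div, b.sum_sq_inner_left]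

lemma integral_exp_mul_inner_apply_stdGaussian {T : E →ₗ[ℝ] E} (hT : T.IsSymmetric) {n : ℕ}
    (hn : Module.finrank ℝ E = n) {l : ℝ} (hl : ∀ i, l * hT.eigenvalues hn i < 1 / 2) :
    ∫ x, exp (l * ⟪x, T x⟫) ∂stdGaussian E
      = ∏ i, (√(1 - 2 * (l * hT.eigenvalues hn i)))⁻¹ := by
  let b := hT.eigenvectorBasis hn
  have hprod (v : Fin n → ℝ) : exp (l * ⟪∑ i, v i • b i, T (∑ i, v i • b i)⟫)
      = ∏ i, exp (l * hT.eigenvalues hn i * v i ^ 2) := by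
    rw [← exp_sum]
    congr 1
    simp only [b, map_sum, map_smul, hT.apply_eigenvectorBasis, smul_smul,
      (hT.eigenvectorBasis hn).orthonormal.inner_sum, Finset.mul_sum, ringHom_apply]
    exact Finset.sum_congr rfl fun i _ ↦ by ring
  have hT_cont := T.continuous_of_finiteDimensional
  rw [integral_stdGaussian_eq_integral_pi b (by fun_prop)]
  simp_rw [hprod]
  rw [integral_fintype_prod_eq_prod (fun i t ↦ exp (l * hT.eigenvalues hn i * t ^ 2))]
  exact Finset.prod_congr rfl fun i _ ↦ integral_exp_mul_sq_gaussianReal (hl i)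

lemma integral_exp_mul_sq_norm_eq_integral_stdGaussian {Ω : Type*} [MeasurableSpace Ω]
    {μ : Measure Ω} [SFinite μ] {ξ : Ω → E} (hξ : AEMeasurable ξ μ) {S : E →ₗ[ℝ] E}
    (hmgf : ∀ u, ∫ ω, exp ⟪u, ξ ω⟫ ∂μ = exp (⟪u, S u⟫ / 2)) {l : ℝ} (hl : 0 ≤ l) :
    ∫ ω, exp (l * ‖ξ ω‖ ^ 2) ∂μ = ∫ x, exp (l * ⟪x, S x⟫) ∂stdGaussian E := by
  set c := √(2 * l)
  have hc : c ^ 2 = 2 * l := sq_sqrt (by positivity)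
  have h_norm (y : E) : ENNReal.ofReal (exp (l * ‖y‖ ^ 2))
      = ∫⁻ x, ENNReal.ofReal (exp ⟪c • y, x⟫) ∂stdGaussian E := by
    rw [lintegral_ofReal_eq_of_integral_eq (ae_of_all _ fun _ ↦ (exp_pos _).le) (exp_pos _).ne'
      (integral_exp_inner_stdGaussian _), norm_smul, mul_pow, Real.norm_eq_abs, sq_abs, hc]
    ring_nf
  have h_quad (x : E) : ∫⁻ ω, ENNReal.ofReal (exp ⟪c • ξ ω, x⟫) ∂μ
      = ENNReal.ofReal (exp (l * ⟪x, S x⟫)) := by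
    have h_comm (ω : Ω) : ⟪c • ξ ω, x⟫ = ⟪c • x, ξ ω⟫ := by
      rw [real_inner_smul_left, real_inner_smul_left, real_inner_comm]
    simp_rw [h_comm]
    rw [lintegral_ofReal_eq_of_integral_eq (ae_of_all _ fun _ ↦ (exp_pos _).le) (exp_pos _).ne'
      (hmgf _), map_smul, real_inner_smul_left, real_inner_smul_right, ← mul_assoc, ← sq, hc]
    ring_nf
  have hS_cont := S.continuous_of_finiteDimensional
  rw [integral_eq_lintegral_of_nonneg_ae (ae_of_all _ fun _ ↦ (exp_pos _).le) (by fun_prop),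
    integral_eq_lintegral_of_nonneg_ae (ae_of_all _ fun _ ↦ (exp_pos _).le) (by fun_prop)]
  congr 1
  calc ∫⁻ ω, ENNReal.ofReal (exp (l * ‖ξ ω‖ ^ 2)) ∂μ
      = ∫⁻ ω, ∫⁻ x, ENNReal.ofReal (exp ⟪c • ξ ω, x⟫) ∂stdGaussian E ∂μ :=
        lintegral_congr fun ω ↦ h_norm (ξ ω)
    _ = ∫⁻ x, ∫⁻ ω, ENNReal.ofReal (exp ⟪c • ξ ω, x⟫) ∂μ ∂stdGaussian E :=
      lintegral_lintegral_swap (by fun_prop)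
    _ = ∫⁻ x, ENNReal.ofReal (exp (l * ⟪x, S x⟫)) ∂stdGaussian E := lintegral_congr h_quad

end StdGaussian

namespace LinearMap.IsSymmetric

variable {E : Type*} [NormedAddCommGroup E] [InnerProductSpace ℝ E] [FiniteDimensional ℝ E]
  {T : E →ₗ[ℝ] E} (hT : T.IsSymmetric) {n : ℕ} (hn : Module.finrank ℝ E = n)
  {ι : Type*} [Fintype ι]

lemma sum_inner_apply_eq_sum_eigenvalues (e : OrthonormalBasis ι ℝ E) :
    ∑ j, ⟪e j, T (e j)⟫ = ∑ i, hT.eigenvalues hn i := by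
  rw [← trace_eq_sum_inner, hT.trace_eq_sum_eigenvalues hn]
  rfl

lemma sum_sq_norm_apply_eq_sum_sq_eigenvalues (e : OrthonormalBasis ι ℝ E) :
    ∑ j, ‖T (e j)‖ ^ 2 = ∑ i, hT.eigenvalues hn i ^ 2 := by
  let b := hT.eigenvectorBasis hn
  calc ∑ j, ‖T (e j)‖ ^ 2 = ∑ j, ⟪e j, (T ∘ₗ T) (e j)⟫ := by
        refine Finset.sum_congr rfl fun j _ ↦ ?_
        rw [← real_inner_self_eq_norm_sq, comp_apply, hT]
    _ = ∑ i, ⟪b i, (T ∘ₗ T) (b i)⟫ := by rw [← trace_eq_sum_inner, trace_eq_sum_inner _ b]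
    _ = ∑ i, hT.eigenvalues hn i ^ 2 := by
      simp [b, hT.apply_eigenvectorBasis, real_inner_smul_right, sq]

end LinearMap.IsSymmetric

lemma LinearMap.IsSymmetric.abs_eigenvalues_le_opNorm {E : Type*} [NormedAddCommGroup E]
    [InnerProductSpace ℝ E] [FiniteDimensional ℝ E] {T : E →L[ℝ] E}
    (hT : (T : E →ₗ[ℝ] E).IsSymmetric) {n : ℕ} (hn : Module.finrank ℝ E = n) (i : Fin n) :
    |hT.eigenvalues hn i| ≤ ‖T‖ := by
  let b := hT.eigenvectorBasis hn
  calc |hT.eigenvalues hn i| = ‖T (b i)‖ := by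
        rw [← ContinuousLinearMap.coe_coe, hT.apply_eigenvectorBasis]; simp [norm_smul]
    _ ≤ ‖T‖ := (T.le_opNorm (b i)).trans_eq (by simp [b])

/-- If `ξ` is a centered Gaussian vector in `ℝ^d` with covariance matrix `Σ`
(characterised by its moment generating function), then for all
`0 ≤ λ < 1/(2‖Σ‖)`, `log E[exp(λ‖ξ‖²)] ≤ λ tr Σ + λ²‖Σ‖_F²/(1 - 2λ‖Σ‖)`. -/
theorem gaussian_squared_norm_cgf_bound
    {Ω : Type*} [MeasurableSpace Ω] {μ : Measure Ω} [IsProbabilityMeasure μ]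
    {d : ℕ} (ξ : Ω → EuclideanSpace ℝ (Fin d)) (hmeas : AEMeasurable ξ μ)
    (S : EuclideanSpace ℝ (Fin d) →L[ℝ] EuclideanSpace ℝ (Fin d))
    (hS : S.IsPositive)
    (hgauss : ∀ u : EuclideanSpace ℝ (Fin d),
      ∫ ω, Real.exp ⟪u, ξ ω⟫ ∂μ = Real.exp (⟪u, S u⟫ / 2))
    (l : ℝ) (hl0 : 0 ≤ l) (hl : l < 1 / (2 * ‖S‖)) :
    Real.log (∫ ω, Real.exp (l * ‖ξ ω‖ ^ 2) ∂μ) ≤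
      l * (∑ i, ⟪EuclideanSpace.basisFun (Fin d) ℝ i,
            S (EuclideanSpace.basisFun (Fin d) ℝ i)⟫) +
        l ^ 2 * (∑ i, ‖S (EuclideanSpace.basisFun (Fin d) ℝ i)‖ ^ 2) /
          (1 - 2 * l * ‖S‖) := by
  have hn : Module.finrank ℝ (EuclideanSpace ℝ (Fin d)) = d := finrank_euclideanSpace_fin
  have hT := hS.toLinearMap.isSymmetric
  set e := EuclideanSpace.basisFun (Fin d) ℝ
  have h_trace : ∑ i, ⟪e i, S (e i)⟫ = ∑ i, hT.eigenvalues hn i :=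
    hT.sum_inner_apply_eq_sum_eigenvalues hn e
  have h_frobenius : ∑ i, ‖S (e i)‖ ^ 2 = ∑ i, hT.eigenvalues hn i ^ 2 :=
    hT.sum_sq_norm_apply_eq_sum_sq_eigenvalues hn e
  have hlS : 2 * (l * ‖S‖) < 1 := by
    rcases (norm_nonneg S).eq_or_lt with hS0 | hS0
    · simp [← hS0] at hl
      linarith
    · rw [lt_div_iff₀ (by positivity)] at hl
      linarith
  have hl_eig (i : Fin d) : l * hT.eigenvalues hn i ≤ l * ‖S‖ :=
    mul_le_mul_of_nonneg_left ((le_abs_self _).trans (hT.abs_eigenvalues_le_opNorm hn i)) hl0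
  rw [integral_exp_mul_sq_norm_eq_integral_stdGaussian hmeas hgauss hl0,
    integral_exp_mul_inner_apply_stdGaussian hT hn fun i ↦ by linarith [hl_eig i],
    log_prod fun i _ ↦ (inv_pos.2 (sqrt_pos.2 (by linarith [hl_eig i]))).ne',
    h_trace, h_frobenius,
    Finset.mul_sum, Finset.mul_sum, Finset.sum_div, ← Finset.sum_add_distrib]
  gcongr with i
  exact (log_inv_sqrt_one_sub_two_mul_le (mul_nonneg hl0 (hS.toLinearMap.nonneg_eigenvalues hn i))
    (hl_eig i) hlS).trans_eq (by ring)
end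

section
/- Let X be R-subgaussian in a real separable Hilbert space 𝒳 with R positive self-adjoint trace class. Then for all ε > 2√tr(R), P[‖X‖ > ε] ≤ exp(−ε² / (8‖R‖)). -/
/-!
Linearize the square with a Gaussian: for `Z` standard Gaussian in `ℝⁿ` and `c² = 2θ`,
`exp (θ ‖y‖²) = E exp (c ⟪Z, y⟫)`. Exchanging the expectations and applying the subgaussian bound
for each fixed `Z` reduces `E exp (θ ‖X‖²)` to a Gaussian integral `E exp (θ ⟪Z, T Z⟫)`, which
diagonalizes and, for `θ ‖T‖ ≤ 1/4`, is at most `exp (2θ tr T)` since `(1 - 2t)⁻¹ ≤ exp (4t)` on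
`[0, 1/4]`. With `θ = 1 / (4‖R‖)` and `tr R ≤ ε²/4` Chernoff gives `exp (-ε² / (8‖R‖))`.
In infinite dimensions this is applied to the projections of `X` onto the spans of finitely many
vectors of the Hilbert basis, whose `R`-compressions have trace at most `tr R`; these events
exhaust `{ε < ‖X‖}`.
-/

open MeasureTheory ProbabilityTheory Real RealInnerProductSpace Finset
open scoped ENNReal

lemma lintegral_fintype_prod_eq_prod {ι : Type*} [Fintype ι] {E : ι → Type*}
    [∀ i, MeasurableSpace (E i)] {ν : ∀ i, Measure (E i)} [∀ i, IsProbabilityMeasure (ν i)]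
    {g : ∀ i, E i → ℝ≥0∞} (hg : ∀ i, Measurable (g i)) :
    ∫⁻ z, ∏ i, g i (z i) ∂Measure.pi ν = ∏ i, ∫⁻ x, g i x ∂ν i := by
  rw [lintegral_prod_eq_prod_lintegral_of_indepFun Finset.univ _
    (iIndepFun_pi fun i => (hg i).aemeasurable) fun i => (hg i).comp (measurable_pi_apply i)]
  congr 1 with i
  exact (measurePreserving_eval ν i).lintegral_comp (hg i)

lemma ENNReal.ofReal_exp_sum {ι : Type*} (s : Finset ι) (f : ι → ℝ) :
    ENNReal.ofReal (exp (∑ i ∈ s, f i)) = ∏ i ∈ s, ENNReal.ofReal (exp (f i)) := by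
  rw [exp_sum, ENNReal.ofReal_prod_of_nonneg fun i _ => (exp_pos _).le]

lemma lintegral_exp_mul_gaussianReal (a : ℝ) :
    ∫⁻ z, ENNReal.ofReal (exp (a * z)) ∂gaussianReal 0 1 = ENNReal.ofReal (exp (a ^ 2 / 2)) := by
  rw [← ofReal_integral_eq_lintegral_ofReal (integrable_exp_mul_gaussianReal a)
    (ae_of_all _ fun _ => (exp_pos _).le)]
  congr 1
  simpa [mgf] using congrFun (mgf_id_gaussianReal (μ := 0) (v := 1)) a

lemma lintegral_exp_mul_sq_gaussianReal_le {c : ℝ} (hc0 : 0 ≤ c) (hc : c ≤ 1 / 4) :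
    ∫⁻ z, ENNReal.ofReal (exp (c * z ^ 2)) ∂gaussianReal 0 1 ≤ ENNReal.ofReal (exp (2 * c)) := by
  have hdens : ∀ z, gaussianPDF 0 1 z * ENNReal.ofReal (exp (c * z ^ 2)) =
      ENNReal.ofReal ((√(2 * π))⁻¹ * exp (-(1 / 2 - c) * z ^ 2)) := by
    intro z
    rw [gaussianPDF, ← ENNReal.ofReal_mul (gaussianPDFReal_nonneg 0 1 z), gaussianPDFReal]
    congr 1
    rw [mul_assoc, ← exp_add]
    congr 2
    · simp
    · push_cast; ring
  rw [gaussianReal_of_var_ne_zero _ one_ne_zero,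
    lintegral_withDensity_eq_lintegral_mul _ (measurable_gaussianPDF 0 1) (by fun_prop)]
  simp only [Pi.mul_apply, hdens]
  rw [← ofReal_integral_eq_lintegral_ofReal
    ((integrable_exp_neg_mul_sq (by linarith)).const_mul _) (ae_of_all _ fun _ => by positivity),
    integral_const_mul, integral_gaussian]
  refine ENNReal.ofReal_le_ofReal ?_
  have hc2 : 0 < 1 - 2 * c := by linarith
  calc (√(2 * π))⁻¹ * √(π / (1 / 2 - c)) = √((1 - 2 * c)⁻¹) := by
        rw [← sqrt_inv, ← sqrt_mul (by positivity)]
        congr 1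
        field_simp
    _ ≤ √(exp (2 * c) ^ 2) := by
        rw [← exp_nat_mul]
        gcongr
        rw [inv_le_iff_one_le_mul₀ hc2]
        push_cast
        nlinarith [add_one_le_exp (2 * (2 * c))]
    _ = exp (2 * c) := sqrt_sq (exp_pos _).le

section Fintype

variable {ι : Type*} [Fintype ι]

lemma lintegral_exp_sum_mul_pi_gaussianReal (a : ι → ℝ) :
    ∫⁻ z, ENNReal.ofReal (exp (∑ i, a i * z i)) ∂Measure.pi (fun _ : ι => gaussianReal 0 1) =
      ENNReal.ofReal (exp (∑ i, a i ^ 2 / 2)) := by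
  simp_rw [ENNReal.ofReal_exp_sum]
  rw [lintegral_fintype_prod_eq_prod (g := fun i x => ENNReal.ofReal (exp (a i * x)))
    fun i => by fun_prop]
  simp_rw [lintegral_exp_mul_gaussianReal]

lemma lintegral_exp_sum_mul_sq_pi_gaussianReal_le {c : ι → ℝ} (hc0 : ∀ i, 0 ≤ c i)
    (hc : ∀ i, c i ≤ 1 / 4) :
    ∫⁻ z, ENNReal.ofReal (exp (∑ i, c i * z i ^ 2)) ∂Measure.pi (fun _ : ι => gaussianReal 0 1) ≤
      ENNReal.ofReal (exp (∑ i, 2 * c i)) := by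
  simp_rw [ENNReal.ofReal_exp_sum]
  rw [lintegral_fintype_prod_eq_prod (g := fun i x => ENNReal.ofReal (exp (c i * x ^ 2)))
    fun i => by fun_prop]
  exact prod_le_prod' fun i _ => lintegral_exp_mul_sq_gaussianReal_le (hc0 i) (hc i)

theorem lintegral_exp_mul_sum_sq_le {Ω : Type*} [MeasurableSpace Ω] {μ : Measure Ω} [SFinite μ]
    {Y : ι → Ω → ℝ} (hY : ∀ k, AEMeasurable (Y k) μ) {σ : ι → ℝ} (hσ : ∀ k, 0 ≤ σ k)
    (hmgf : ∀ l : ι → ℝ, ∫⁻ ω, ENNReal.ofReal (exp (∑ k, l k * Y k ω)) ∂μ ≤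
      ENNReal.ofReal (exp (∑ k, σ k * l k ^ 2 / 2)))
    {θ : ℝ} (hθ0 : 0 ≤ θ) (hθ : ∀ k, θ * σ k ≤ 1 / 4) :
    ∫⁻ ω, ENNReal.ofReal (exp (θ * ∑ k, Y k ω ^ 2)) ∂μ ≤
      ENNReal.ofReal (exp (2 * θ * ∑ k, σ k)) := by
  set γ : Measure (ι → ℝ) := Measure.pi fun _ => gaussianReal 0 1
  set c := √(2 * θ)
  have hc : c ^ 2 = 2 * θ := sq_sqrt (by positivity)
  have hlin : ∀ ω, ENNReal.ofReal (exp (θ * ∑ k, Y k ω ^ 2)) =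
      ∫⁻ z, ENNReal.ofReal (exp (∑ k, c * Y k ω * z k)) ∂γ := by
    intro ω
    rw [lintegral_exp_sum_mul_pi_gaussianReal, mul_sum]
    congr 2
    refine sum_congr rfl fun k _ => ?_
    rw [mul_pow, hc]
    ring
  have hquad : ∀ z : ι → ℝ, ∫⁻ ω, ENNReal.ofReal (exp (∑ k, c * Y k ω * z k)) ∂μ ≤
      ENNReal.ofReal (exp (∑ k, θ * σ k * z k ^ 2)) := by
    intro z
    convert hmgf (fun k => c * z k) using 5 with ω
    · exact sum_congr rfl fun k _ => by ring
    · rw [mul_pow, hc]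
      ring
  have hmeas : AEMeasurable (Function.uncurry fun ω (z : ι → ℝ) =>
      ENNReal.ofReal (exp (∑ k, c * Y k ω * z k))) (μ.prod γ) := by
    have hYfst := fun k =>
      (hY k).comp_quasiMeasurePreserving (Measure.quasiMeasurePreserving_fst (ν := γ))
    fun_prop
  calc ∫⁻ ω, ENNReal.ofReal (exp (θ * ∑ k, Y k ω ^ 2)) ∂μ
      = ∫⁻ ω, ∫⁻ z, ENNReal.ofReal (exp (∑ k, c * Y k ω * z k)) ∂γ ∂μ := lintegral_congr hlin
    _ = ∫⁻ z, ∫⁻ ω, ENNReal.ofReal (exp (∑ k, c * Y k ω * z k)) ∂μ ∂γ :=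
        lintegral_lintegral_swap hmeas
    _ ≤ ∫⁻ z, ENNReal.ofReal (exp (∑ k, θ * σ k * z k ^ 2)) ∂γ := lintegral_mono hquad
    _ ≤ ENNReal.ofReal (exp (∑ k, 2 * (θ * σ k))) :=
        lintegral_exp_sum_mul_sq_pi_gaussianReal_le (fun k => mul_nonneg hθ0 (hσ k)) hθ
    _ = ENNReal.ofReal (exp (2 * θ * ∑ k, σ k)) := by
        simp_rw [mul_sum, mul_assoc]

end Fintype

lemma measure_lt_le_exp_mul_lintegral_exp {Ω : Type*} [MeasurableSpace Ω] {μ : Measure Ω}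
    {f : Ω → ℝ} (hf : AEMeasurable f μ) {θ : ℝ} (hθ : 0 ≤ θ) (a : ℝ) :
    μ {ω | a < f ω} ≤
      ENNReal.ofReal (exp (-(θ * a))) * ∫⁻ ω, ENNReal.ofReal (exp (θ * f ω)) ∂μ := by
  set r := ENNReal.ofReal (exp (θ * a))
  calc μ {ω | a < f ω} ≤ μ {ω | r ≤ ENNReal.ofReal (exp (θ * f ω))} :=
        measure_mono fun ω hω => ENNReal.ofReal_le_ofReal (exp_le_exp.2 (by gcongr; exact hω.le))
    _ = ENNReal.ofReal (exp (-(θ * a))) * (r * μ {ω | r ≤ ENNReal.ofReal (exp (θ * f ω))}) := by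
        rw [← mul_assoc, ← ENNReal.ofReal_mul (exp_pos _).le, ← exp_add, neg_add_cancel, exp_zero,
          ENNReal.ofReal_one, one_mul]
    _ ≤ _ := by gcongr; exact mul_meas_ge_le_lintegral₀ (by fun_prop) r

/-- `R`-subgaussianity, `log E exp ⟪u, X⟫ ≤ ⟪u, R u⟫ / 2`, stated with the lower Lebesgue integral
so that integrability of `exp ⟪u, X⟫` is part of the condition. -/
def IsSubgaussianWith {Ω E : Type*} [MeasurableSpace Ω] [NormedAddCommGroup E]
    [InnerProductSpace ℝ E] (μ : Measure Ω) (X : Ω → E) (R : E →L[ℝ] E) : Prop :=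
  ∀ u : E, ∫⁻ ω, ENNReal.ofReal (exp ⟪u, X ω⟫) ∂μ ≤ ENNReal.ofReal (exp (⟪u, R u⟫ / 2))

lemma LinearMap.IsSymmetric.inner_map_self_eq_sum_eigenvalues {F : Type*} [NormedAddCommGroup F]
    [InnerProductSpace ℝ F] [FiniteDimensional ℝ F] {T : F →ₗ[ℝ] F} (hT : T.IsSymmetric) {n : ℕ}
    (hn : Module.finrank ℝ F = n) (x : F) :
    ⟪x, T x⟫ = ∑ i, hT.eigenvalues hn i * ⟪hT.eigenvectorBasis hn i, x⟫ ^ 2 := by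
  rw [← (hT.eigenvectorBasis hn).sum_inner_mul_inner x (T x)]
  refine sum_congr rfl fun i _ => ?_
  rw [← hT, hT.apply_eigenvectorBasis, real_inner_smul_left, real_inner_comm x]
  simp only [RCLike.ofReal_real_eq_id, id_eq]
  ring

lemma LinearMap.IsSymmetric.eigenvalues_le_norm {F : Type*} [NormedAddCommGroup F]
    [InnerProductSpace ℝ F] [FiniteDimensional ℝ F] {T : F →L[ℝ] F}
    (hT : (T : F →ₗ[ℝ] F).IsSymmetric) {n : ℕ} (hn : Module.finrank ℝ F = n) (i : Fin n) :
    hT.eigenvalues hn i ≤ ‖T‖ := by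
  set e := hT.eigenvectorBasis hn
  have h : ⟪e i, T (e i)⟫ = hT.eigenvalues hn i := by
    rw [← ContinuousLinearMap.coe_coe, hT.apply_eigenvectorBasis, real_inner_smul_right,
      real_inner_self_eq_norm_sq, e.norm_eq_one]
    simp
  calc hT.eigenvalues hn i = ⟪e i, T (e i)⟫ := h.symm
    _ ≤ ‖e i‖ * ‖T (e i)‖ := real_inner_le_norm _ _
    _ ≤ ‖T‖ := by simpa [e.norm_eq_one] using T.le_opNorm (e i)

section FiniteDimensional

variable {Ω : Type*} [MeasurableSpace Ω] {μ : Measure Ω} [SFinite μ]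
  {F : Type*} [NormedAddCommGroup F] [InnerProductSpace ℝ F] [FiniteDimensional ℝ F]
  [MeasurableSpace F] [BorelSpace F]
  {Z : Ω → F} {T : F →L[ℝ] F}

theorem IsSubgaussianWith.lintegral_exp_mul_norm_sq_le (hsub : IsSubgaussianWith μ Z T)
    (hZ : AEMeasurable Z μ) (hT : T.IsPositive) {θ : ℝ} (hθ0 : 0 ≤ θ) (hθ : θ * ‖T‖ ≤ 1 / 4) :
    ∫⁻ ω, ENNReal.ofReal (exp (θ * ‖Z ω‖ ^ 2)) ∂μ ≤
      ENNReal.ofReal (exp (2 * θ * LinearMap.trace ℝ F T)) := by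
  set hTs := hT.isSymmetric
  set e := hTs.eigenvectorBasis rfl
  have hnorm : ∀ ω, ‖Z ω‖ ^ 2 = ∑ k, ⟪e k, Z ω⟫ ^ 2 := fun ω => (e.sum_sq_inner_right _).symm
  simp_rw [hnorm, hTs.trace_eq_sum_eigenvalues rfl]
  refine lintegral_exp_mul_sum_sq_le (fun k => by fun_prop) (hT.toLinearMap.nonneg_eigenvalues rfl)
    (fun l => ?_) hθ0 fun k => ?_
  · have hcoord : ∀ k, ⟪e k, ∑ j, l j • e j⟫ = l k := e.orthonormal.inner_right_fintype l
    convert hsub (∑ j, l j • e j) using 4 with ω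
    · simp_rw [sum_inner, real_inner_smul_left]
    · rw [← ContinuousLinearMap.coe_coe, hTs.inner_map_self_eq_sum_eigenvalues rfl, sum_div]
      exact sum_congr rfl fun k _ => by rw [← hcoord k]
  · exact (mul_le_mul_of_nonneg_left (hTs.eigenvalues_le_norm rfl k) hθ0).trans hθ

theorem IsSubgaussianWith.measure_lt_norm_le (hsub : IsSubgaussianWith μ Z T)
    (hZ : AEMeasurable Z μ) (hT : T.IsPositive) {B : ℝ} (hB : 0 < B) (hTB : ‖T‖ ≤ B) {ε : ℝ}
    (hε : 0 ≤ ε) (htr : LinearMap.trace ℝ F T ≤ ε ^ 2 / 4) :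
    μ {ω | ε < ‖Z ω‖} ≤ ENNReal.ofReal (exp (-(ε ^ 2) / (8 * B))) := by
  set θ := (4 * B)⁻¹ with hθ_def
  have hθ0 : 0 ≤ θ := by positivity
  have hθT : θ * ‖T‖ ≤ 1 / 4 := by
    calc θ * ‖T‖ ≤ θ * B := by gcongr
      _ = 1 / 4 := by rw [hθ_def]; field_simp
  calc μ {ω | ε < ‖Z ω‖} ≤ μ {ω | ε ^ 2 < ‖Z ω‖ ^ 2} :=
        measure_mono fun ω hω => pow_lt_pow_left₀ hω hε two_ne_zero
    _ ≤ ENNReal.ofReal (exp (-(θ * ε ^ 2))) * ∫⁻ ω, ENNReal.ofReal (exp (θ * ‖Z ω‖ ^ 2)) ∂μ :=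
        measure_lt_le_exp_mul_lintegral_exp (by fun_prop) hθ0 _
    _ ≤ ENNReal.ofReal (exp (-(θ * ε ^ 2))) *
          ENNReal.ofReal (exp (2 * θ * LinearMap.trace ℝ F T)) := by
        gcongr
        exact hsub.lintegral_exp_mul_norm_sq_le hZ hT hθ0 hθT
    _ ≤ ENNReal.ofReal (exp (-(ε ^ 2) / (8 * B))) := by
        rw [← ENNReal.ofReal_mul (exp_pos _).le, ← exp_add]
        gcongr
        calc -(θ * ε ^ 2) + 2 * θ * LinearMap.trace ℝ F T ≤ -(θ * ε ^ 2) + 2 * θ * (ε ^ 2 / 4) := by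
              gcongr
          _ = -(ε ^ 2) / (8 * B) := by rw [hθ_def]; field_simp; ring

end FiniteDimensional

section Compression

variable {E : Type*} [NormedAddCommGroup E] [InnerProductSpace ℝ E]
  (V : Submodule ℝ E) [V.HasOrthogonalProjection] (R : E →L[ℝ] E)

noncomputable def compression : V →L[ℝ] V :=
  V.orthogonalProjectionOnto ∘L R ∘L V.subtypeL

lemma inner_compression (u v : V) : ⟪u, compression V R v⟫ = ⟪(u : E), R v⟫ :=
  Submodule.inner_orthogonalProjectionOnto_eq_of_mem_left u _

variable {V R}

lemma ContinuousLinearMap.IsPositive.compression (hR : R.IsPositive) :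
    (compression V R).IsPositive := by
  refine (ContinuousLinearMap.isPositive_iff _).2 ⟨fun u v => ?_, fun u => ?_⟩
  · simp only [ContinuousLinearMap.coe_coe]
    rw [real_inner_comm, inner_compression, inner_compression, real_inner_comm,
      hR.inner_left_eq_inner_right]
  · rw [real_inner_comm, inner_compression]
    exact hR.inner_nonneg_right _

variable (V R)

lemma norm_compression_le : ‖compression V R‖ ≤ ‖R‖ :=
  calc ‖compression V R‖ ≤ ‖V.orthogonalProjectionOnto‖ * (‖R‖ * ‖V.subtypeL‖) :=
        (ContinuousLinearMap.opNorm_comp_le _ _).trans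
          (by gcongr; exact ContinuousLinearMap.opNorm_comp_le _ _)
    _ ≤ 1 * (‖R‖ * 1) := by
        gcongr
        exacts [V.orthogonalProjectionOnto_norm_le, Submodule.norm_subtypeL_le V]
    _ = ‖R‖ := by ring

lemma trace_compression_span [DecidableEq E] {ι : Type*} {v : ι → E} (hv : Orthonormal ℝ v)
    (s : Finset ι) :
    LinearMap.trace ℝ _ (compression (Submodule.span ℝ (s.image v : Set E)) R).toLinearMap =
      ∑ i ∈ s, ⟪v i, R (v i)⟫ := by
  rw [LinearMap.trace_eq_sum_inner _ (OrthonormalBasis.span hv s), ← sum_coe_sort s]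
  refine sum_congr rfl fun i _ => ?_
  rw [ContinuousLinearMap.coe_coe, inner_compression, OrthonormalBasis.span_apply]

lemma IsSubgaussianWith.orthogonalProjectionOnto {Ω : Type*} [MeasurableSpace Ω] {μ : Measure Ω}
    {X : Ω → E} (h : IsSubgaussianWith μ X R) :
    IsSubgaussianWith μ (fun ω => V.orthogonalProjectionOnto (X ω)) (compression V R) := by
  intro u
  simpa only [Submodule.inner_orthogonalProjectionOnto_eq_of_mem_left, inner_compression] using h u

end Compression

lemma Orthonormal.norm_orthogonalProjectionOnto_span_sq {E : Type*} [NormedAddCommGroup E]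
    [InnerProductSpace ℝ E] [DecidableEq E] {ι : Type*} {v : ι → E} (hv : Orthonormal ℝ v)
    (s : Finset ι) (x : E) :
    ‖(Submodule.span ℝ (s.image v : Set E)).orthogonalProjectionOnto x‖ ^ 2 =
      ∑ i ∈ s, ⟪v i, x⟫ ^ 2 := by
  rw [← (OrthonormalBasis.span hv s).sum_sq_inner_right, ← sum_coe_sort s]
  refine sum_congr rfl fun i _ => ?_
  rw [Submodule.inner_orthogonalProjectionOnto_eq_of_mem_left, OrthonormalBasis.span_apply]

lemma isSubgaussianWith_of_log_integral_le {Ω E : Type*} [MeasurableSpace Ω] {μ : Measure Ω}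
    [NeZero μ] [NormedAddCommGroup E] [InnerProductSpace ℝ E] {X : Ω → E} {R : E →L[ℝ] E}
    (hint : ∀ u : E, Integrable (fun ω => exp ⟪u, X ω⟫) μ)
    (hsub : ∀ u : E, log (∫ ω, exp ⟪u, X ω⟫ ∂μ) ≤ ⟪u, R u⟫ / 2) :
    IsSubgaussianWith μ X R := fun u => by
  rw [← ofReal_integral_eq_lintegral_ofReal (hint u) (ae_of_all _ fun _ => (exp_pos _).le)]
  exact ENNReal.ofReal_le_ofReal ((log_le_iff_le_exp (integral_exp_pos (hint u))).1 (hsub u))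

section HilbertBasis

open Filter Topology

variable {E : Type*} [NormedAddCommGroup E] [InnerProductSpace ℝ E] [DecidableEq E]
  {ι : Type*} (b : HilbertBasis ι ℝ E)

lemma HilbertBasis.tendsto_norm_orthogonalProjectionOnto_span (x : E) :
    Tendsto
      (fun s : Finset ι => ‖(Submodule.span ℝ (s.image b : Set E)).orthogonalProjectionOnto x‖)
      atTop (𝓝 ‖x‖) := by
  have hsum : HasSum (fun i => ⟪b i, x⟫ ^ 2) (‖x‖ ^ 2) := by
    simpa only [real_inner_comm x, ← sq, real_inner_self_eq_norm_sq] using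
      b.hasSum_inner_mul_inner x x
  have h := ((continuous_sqrt.tendsto _).comp hsum)
  rw [sqrt_sq (norm_nonneg x)] at h
  refine h.congr fun s => ?_
  rw [Function.comp_apply, ← b.orthonormal.norm_orthogonalProjectionOnto_span_sq,
    sqrt_sq (norm_nonneg _)]

lemma HilbertBasis.measure_lt_norm_le_iSup_orthogonalProjectionOnto [Countable ι] {Ω : Type*}
    [MeasurableSpace Ω] (μ : Measure Ω) (X : Ω → E) (ε : ℝ) :
    μ {ω | ε < ‖X ω‖} ≤ ⨆ s : Finset ι,
      μ {ω | ε < ‖(Submodule.span ℝ (s.image b : Set E)).orthogonalProjectionOnto (X ω)‖} := by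
  have hmono : Monotone fun s : Finset ι =>
      {ω | ε < ‖(Submodule.span ℝ (s.image b : Set E)).orthogonalProjectionOnto (X ω)‖} := by
    intro s t hst ω (hω : ε < _)
    refine lt_of_lt_of_le hω ?_
    rw [← pow_le_pow_iff_left₀ (norm_nonneg _) (norm_nonneg _) two_ne_zero,
      b.orthonormal.norm_orthogonalProjectionOnto_span_sq,
      b.orthonormal.norm_orthogonalProjectionOnto_span_sq]
    exact sum_le_sum_of_subset_of_nonneg hst fun i _ _ => sq_nonneg _
  rw [← hmono.measure_iUnion]
  exact measure_mono fun ω hω => Set.mem_iUnion.2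
    ((b.tendsto_norm_orthogonalProjectionOnto_span (X ω)).eventually_const_lt hω).exists

end HilbertBasis

theorem rSubgaussian_norm_tail_bound_general
    {𝓧 : Type*} [NormedAddCommGroup 𝓧] [InnerProductSpace ℝ 𝓧]
    [MeasurableSpace 𝓧] [BorelSpace 𝓧]
    {Ω : Type*} [MeasurableSpace Ω] {μ : Measure Ω} [IsProbabilityMeasure μ]
    (X : Ω → 𝓧) (hmeas : AEMeasurable X μ)
    (R : 𝓧 →L[ℝ] 𝓧) (hR : R.IsPositive)
    {ι : Type*} [Countable ι] (b : HilbertBasis ι ℝ 𝓧)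
    (trR : ℝ) (htr : HasSum (fun i => ⟪b i, R (b i)⟫) trR)
    (hint : ∀ u : 𝓧, Integrable (fun ω => Real.exp ⟪u, X ω⟫) μ)
    (hsub : ∀ u : 𝓧, Real.log (∫ ω, Real.exp ⟪u, X ω⟫ ∂μ) ≤ ⟪u, R u⟫ / 2)
    (ε : ℝ) (hε : 2 * Real.sqrt trR < ε) :
    μ {ω | ε < ‖X ω‖} ≤ ENNReal.ofReal (Real.exp (-(ε ^ 2) / (8 * ‖R‖))) := by
  classical
  rcases (norm_nonneg R).eq_or_lt with hR0 | hRpos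
  · rw [← hR0, mul_zero, div_zero, exp_zero, ENNReal.ofReal_one]
    exact prob_le_one
  have htr0 : 0 ≤ trR := htr.nonneg fun i => hR.inner_nonneg_right (b i)
  have hε0 : 0 ≤ ε := by linarith [sqrt_nonneg trR]
  have htrε : trR ≤ ε ^ 2 / 4 := by nlinarith [sq_sqrt htr0, sqrt_nonneg trR]
  have hX := isSubgaussianWith_of_log_integral_le hint hsub
  refine (b.measure_lt_norm_le_iSup_orthogonalProjectionOnto μ X ε).trans (iSup_le fun s => ?_)
  refine (hX.orthogonalProjectionOnto _).measure_lt_norm_le (by fun_prop) hR.compression hRpos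
    (norm_compression_le _ _) hε0 ?_
  rw [trace_compression_span R b.orthonormal]
  exact (sum_le_hasSum s (fun i _ => hR.inner_nonneg_right (b i)) htr).trans htrε

/-- Hoeffding-type outer tail bound for an `R`-subgaussian vector in a real separable
Hilbert space: for all `ε > 2√(tr R)`, `P[‖X‖ > ε] ≤ exp(-ε²/(8‖R‖))`. -/
theorem rSubgaussian_norm_tail_bound
    {𝓧 : Type*} [NormedAddCommGroup 𝓧] [InnerProductSpace ℝ 𝓧] [CompleteSpace 𝓧]
    [TopologicalSpace.SeparableSpace 𝓧] [MeasurableSpace 𝓧] [BorelSpace 𝓧]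
    {Ω : Type*} [MeasurableSpace Ω] {μ : Measure Ω} [IsProbabilityMeasure μ]
    (X : Ω → 𝓧) (hmeas : AEMeasurable X μ)
    (R : 𝓧 →L[ℝ] 𝓧) (hR : R.IsPositive)
    {ι : Type*} [Countable ι] (b : HilbertBasis ι ℝ 𝓧)
    (trR : ℝ) (htr : HasSum (fun i => ⟪b i, R (b i)⟫) trR)
    (hint : ∀ u : 𝓧, Integrable (fun ω => Real.exp ⟪u, X ω⟫) μ)
    (hsub : ∀ u : 𝓧, Real.log (∫ ω, Real.exp ⟪u, X ω⟫ ∂μ) ≤ ⟪u, R u⟫ / 2)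
    (ε : ℝ) (hε : 2 * Real.sqrt trR < ε) :
    μ {ω | ε < ‖X ω‖} ≤ ENNReal.ofReal (Real.exp (-(ε ^ 2) / (8 * ‖R‖))) :=
  rSubgaussian_norm_tail_bound_general X hmeas R hR b trR htr hint hsub ε hε
end

section
/- Let A : 𝒳 → 𝒴 be a Hilbert–Schmidt operator between real separable Hilbert spaces and X a σ²-weakly subgaussian centered random vector in 𝒳. Then AX is σ²AA*-subgaussian in 𝒴. -/
open MeasureTheory RealInnerProductSpace

/-- If `A : 𝓧 → 𝓨` is a Hilbert–Schmidt operator (squared Hilbert–Schmidt norm summable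
along a Hilbert basis) and `X` is `σ²`-weakly subgaussian in `𝓧`, then `AX` is
`σ² A A*`-subgaussian in `𝓨`. -/
theorem weaklySubgaussian_hs_image
    {𝓧 : Type*} [NormedAddCommGroup 𝓧] [InnerProductSpace ℝ 𝓧] [CompleteSpace 𝓧]
    [TopologicalSpace.SeparableSpace 𝓧]
    {𝓨 : Type*} [NormedAddCommGroup 𝓨] [InnerProductSpace ℝ 𝓨] [CompleteSpace 𝓨]
    [TopologicalSpace.SeparableSpace 𝓨]
    {Ω : Type*} [MeasurableSpace Ω] {μ : Measure Ω} [IsProbabilityMeasure μ]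
    (X : Ω → 𝓧)
    (A : 𝓧 →L[ℝ] 𝓨)
    {ι : Type*} [Countable ι] (b : HilbertBasis ι ℝ 𝓧)
    (hHS : Summable (fun i => ‖A (b i)‖ ^ 2))
    (σ2 : ℝ) (hσ2 : 0 < σ2)
    (hint : ∀ u : 𝓧, Integrable (fun ω => Real.exp ⟪u, X ω⟫) μ)
    (hsub : ∀ u : 𝓧, Real.log (∫ ω, Real.exp ⟪u, X ω⟫ ∂μ) ≤ σ2 * ‖u‖ ^ 2 / 2) :
    ∀ y : 𝓨, Real.log (∫ ω, Real.exp ⟪y, A (X ω)⟫ ∂μ) ≤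
      σ2 * ⟪y, (A ∘L ContinuousLinearMap.adjoint A) y⟫ / 2 := by
  intro y
  have h1 : ∀ ω, ⟪y, A (X ω)⟫ = ⟪ContinuousLinearMap.adjoint A y, X ω⟫ := fun ω =>
    (ContinuousLinearMap.adjoint_inner_left A (X ω) y).symm
  have h2 : ⟪y, (A ∘L ContinuousLinearMap.adjoint A) y⟫
      = ‖ContinuousLinearMap.adjoint A y‖ ^ 2 := by
    rw [ContinuousLinearMap.comp_apply, ← ContinuousLinearMap.adjoint_inner_left,
      real_inner_self_eq_norm_sq]
  simp only [h1, h2]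
  exact hsub (ContinuousLinearMap.adjoint A y)
end
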